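/- Let A = (a_1, ..., a_s) be a sequence of positive integers, let L = lcm(a_1, ..., a_s), and let n ≥ s·L². Then the A-monoculture banana path on n+1 vertices satisfies gon(B_{A;n}) = lcm(a_1, ..., a_s). -/

import Mathlib

open Finset

attribute [local instance] Classical.propDecidable

noncomputable section

/-- A finite loopless multigraph on vertex type `V`, given by a symmetric
edge-multiplicity function: `mul u v` is the number of edges joining `u` and `v`. -/
structure Multigraph (V : Type) [Fintype V] where
  mul : V → V → ℕ
  symm : ∀ u v, mul u v = mul v u
  loopless : ∀ v, mul v v = 0

namespace Multigraph

variable {V : Type} [Fintype V]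

/-- The underlying simple graph of a multigraph. -/
def underlying (G : Multigraph V) : SimpleGraph V where
  Adj u v := 0 < G.mul u v
  symm := by
    constructor
    intro u v h
    rwa [G.symm] at h
  loopless := by
    constructor
    intro v h
    simp [G.loopless] at h

/-- A multigraph is connected if its underlying simple graph is. -/
def Connected (G : Multigraph V) : Prop := G.underlying.Connected

/-- A banana tree is a multigraph whose underlying simple graph is a tree. -/
def IsBananaTree (G : Multigraph V) : Prop := G.underlying.IsTree

/-- The valence (degree) of a vertex. -/
def valence (G : Multigraph V) (v : V) : ℕ := ∑ w, G.mul v w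

/-- The number of edges of a multigraph. -/
def edgeCount (G : Multigraph V) : ℕ := (∑ u, ∑ v, G.mul u v) / 2

/-- The genus (first Betti number) `|E| - |V| + 1` of a connected multigraph. -/
def genus (G : Multigraph V) : ℕ := G.edgeCount + 1 - Fintype.card V

/-- The degree of a divisor: the total number of chips. -/
def degree (D : V → ℤ) : ℤ := ∑ v, D v

/-- A divisor is effective if it is nonnegative everywhere. -/
def Effective (D : V → ℤ) : Prop := ∀ v, 0 ≤ D v

/-- Linear equivalence of divisors: `D'` is obtained from `D` by a finite sequence of
chip-firing moves, equivalently (for connected graphs) via an integral firing script `σ`. -/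
def LinEquiv (G : Multigraph V) (D D' : V → ℤ) : Prop :=
  ∃ σ : V → ℤ, ∀ v, D' v = D v + ∑ w, (G.mul v w : ℤ) * (σ w - σ v)

/-- A divisor has positive rank if for every vertex `v` it is linearly equivalent to an
effective divisor placing at least one chip on `v`. -/
def PosRank (G : Multigraph V) (D : V → ℤ) : Prop :=
  ∀ v, ∃ D', G.LinEquiv D D' ∧ Effective D' ∧ 1 ≤ D' v

/-- The (divisorial) gonality: the minimum degree of a positive-rank effective divisor. -/
def gonality (G : Multigraph V) : ℕ :=
  sInf {d : ℕ | ∃ D : V → ℤ, Effective D ∧ G.PosRank D ∧ degree D = (d : ℤ)}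

/-- `f(G, v, k)`: the minimum degree of an effective divisor `D` on `G` such that
`D + k·v` has positive rank. -/
def fmin (G : Multigraph V) (v : V) (k : ℕ) : ℕ :=
  sInf {d : ℕ | ∃ D : V → ℤ, Effective D ∧
    G.PosRank (fun u => D u + if u = v then (k : ℤ) else 0) ∧ degree D = (d : ℤ)}

/-- Delete a vertex from a multigraph. -/
def deleteVertex (G : Multigraph V) (v : V) : Multigraph {u : V // u ≠ v} where
  mul a b := G.mul a.1 b.1
  symm := fun a b => G.symm a.1 b.1
  loopless := fun a => G.loopless a.1

/-- Delete one single edge between `u` and `w` (if any) from a multigraph. -/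
def deleteOneEdge (G : Multigraph V) (u w : V) : Multigraph V where
  mul x y := if (x = u ∧ y = w) ∨ (x = w ∧ y = u) then G.mul x y - 1 else G.mul x y
  symm := by
    intro x y
    by_cases h : (x = u ∧ y = w) ∨ (x = w ∧ y = u)
    · have h' : (y = u ∧ x = w) ∨ (y = w ∧ x = u) := by tauto
      simp [h, h', G.symm x y]
    · have h' : ¬((y = u ∧ x = w) ∨ (y = w ∧ x = u)) := by tauto
      simp [h, h', G.symm x y]
  loopless := by
    intro v
    by_cases h : (v = u ∧ v = w) ∨ (v = w ∧ v = u)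
    · simp [h, G.loopless]
    · simp [h, G.loopless]

/-- The adjacency move from `v` to `w` on a banana tree: the subset-firing move at the
connected component of `v` after removing the `v`-`w` edge bunch.  Its net effect is to
move `|E(v,w)|` chips from `v` to `w`. -/
def adjMove (G : Multigraph V) (v w : V) (D : V → ℤ) : V → ℤ :=
  fun u => if u = v then D u - (G.mul v w : ℤ)
    else if u = w then D u + (G.mul v w : ℤ) else D u

/-- A single legal adjacency move: both divisors are effective and the second is
obtained from the first by an adjacency move between adjacent vertices. -/
def LegalAdjStep (G : Multigraph V) (D D' : V → ℤ) : Prop :=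
  ∃ v w, G.underlying.Adj v w ∧ Effective D ∧ Effective D' ∧ D' = G.adjMove v w D

/-- A scramble: a collection of nonempty vertex sets (eggs), each inducing a connected
subgraph. -/
def IsScramble (G : Multigraph V) (S : Finset (Finset V)) : Prop :=
  ∀ X ∈ S, X.Nonempty ∧ (G.underlying.induce (X : Set V)).Connected

/-- A hitting set of a scramble: a set of vertices meeting every egg. -/
def IsHittingSet (S : Finset (Finset V)) (T : Finset V) : Prop :=
  ∀ X ∈ S, (X ∩ T).Nonempty

/-- The hitting number of a scramble. -/
def hittingNumber (S : Finset (Finset V)) : ℕ∞ :=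
  sInf {t : ℕ∞ | ∃ T : Finset V, IsHittingSet S T ∧ (T.card : ℕ∞) = t}

/-- The simple graph remaining after removing `c u w` of the edges of each bunch. -/
def cutGraph (G : Multigraph V) (c : V → V → ℕ) : SimpleGraph V where
  Adj u w := u ≠ w ∧ c u w < G.mul u w ∧ c w u < G.mul w u
  symm := ⟨fun u w h => ⟨h.1.symm, h.2.2, h.2.1⟩⟩
  loopless := ⟨fun u h => h.1 rfl⟩

/-- `c` describes an egg-cut of the scramble `S`: a set of edges of `G` (given by the
number `c u w` of edges removed from each bunch) whose removal leaves at least two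
connected components each completely containing an egg. -/
def IsEggCut (G : Multigraph V) (S : Finset (Finset V)) (c : V → V → ℕ) : Prop :=
  (∀ u w, c u w = c w u) ∧ (∀ u w, c u w ≤ G.mul u w) ∧
  ∃ X₁ ∈ S, ∃ X₂ ∈ S,
    (∀ x ∈ X₁, ∀ y ∈ X₁, (G.cutGraph c).Reachable x y) ∧
    (∀ x ∈ X₂, ∀ y ∈ X₂, (G.cutGraph c).Reachable x y) ∧
    (∀ x ∈ X₁, ∀ y ∈ X₂, ¬ (G.cutGraph c).Reachable x y)

/-- The egg-cut number of a scramble (`⊤` if no egg-cut exists). -/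
def eggCutNumber (G : Multigraph V) (S : Finset (Finset V)) : ℕ∞ :=
  sInf {t : ℕ∞ | ∃ c : V → V → ℕ, G.IsEggCut S c ∧
    ((∑ u, ∑ w, c u w : ℕ) : ℕ∞) = 2 * t}

/-- The order of a scramble: the minimum of its hitting number and egg-cut number. -/
def scrambleOrder (G : Multigraph V) (S : Finset (Finset V)) : ℕ∞ :=
  min (hittingNumber S) (G.eggCutNumber S)

/-- The scramble number of a multigraph: the maximum order of a scramble on it. -/
def scrambleNumber (G : Multigraph V) : ℕ∞ :=
  sSup {m : ℕ∞ | ∃ S : Finset (Finset V), G.IsScramble S ∧ G.scrambleOrder S = m}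

/-- The weight of a node `t` in a tree-cut decomposition `(T, X)`: the number of vertices
mapped to `t` plus the number of edges routed through `t` with neither endpoint mapped
to `t`. -/
def nodeWeight (G : Multigraph V) {N : Type} [Fintype N] (T : SimpleGraph N)
    (X : V → N) (t : N) : ℕ :=
  (Finset.univ.filter fun v => X v = t).card +
    (∑ u, ∑ w, if X u ≠ t ∧ X w ≠ t ∧
        ¬ (T.deleteEdges {e | t ∈ e}).Reachable (X u) (X w)
      then G.mul u w else 0) / 2

/-- The weight of a link `pq` in a tree-cut decomposition `(T, X)`: the number of edges
of `G` routed through that link. -/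
def linkWeight (G : Multigraph V) {N : Type} (T : SimpleGraph N)
    (X : V → N) (p q : N) : ℕ :=
  (∑ u, ∑ w, if ¬ (T.deleteEdges {s(p, q)}).Reachable (X u) (X w)
    then G.mul u w else 0) / 2

/-- The width of a tree-cut decomposition `(T, X)`: the maximum of all node and link
weights. -/
def tcdWidth (G : Multigraph V) {N : Type} [Fintype N] (T : SimpleGraph N)
    (X : V → N) : ℕ :=
  max (Finset.univ.sup fun t => G.nodeWeight T X t)
      (Finset.univ.sup fun p : N × N =>
        if T.Adj p.1 p.2 then G.linkWeight T X p.1 p.2 else 0)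

/-- The screewidth of a multigraph: the minimum width of a tree-cut decomposition. -/
def screewidth (G : Multigraph V) : ℕ :=
  sInf {w : ℕ | ∃ (m : ℕ) (T : SimpleGraph (Fin m)), T.IsTree ∧
    ∃ X : V → Fin m, G.tcdWidth T X = w}

/-- The banana path on `n+1` vertices `v_0, …, v_n`, with `a i` edges joining
`v_i` and `v_{i+1}` (for `0 ≤ i < n`). -/
def bananaPath (n : ℕ) (a : ℕ → ℕ) : Multigraph (Fin (n + 1)) where
  mul i j := if i.val + 1 = j.val then a i.val else if j.val + 1 = i.val then a j.val else 0
  symm := by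
    intro u v
    try dsimp only
    split_ifs <;> first | rfl | (exfalso; omega)
  loopless := by
    intro v
    have h : ¬ (v.val + 1 = v.val) := by omega
    simp [h]

/-- The banana star with central vertex `Sum.inl ()` and, for each `i : Fin k`,
`r i` leaves joined to the center by `a i` parallel edges. -/
def bananaStar (k : ℕ) (a r : Fin k → ℕ) :
    Multigraph (Unit ⊕ (Σ i : Fin k, Fin (r i))) where
  mul x y :=
    match x, y with
    | Sum.inl _, Sum.inr ⟨i, _⟩ => a i
    | Sum.inr ⟨i, _⟩, Sum.inl _ => a i
    | _, _ => 0
  symm := by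
    intro u v
    rcases u with u | ⟨i, li⟩ <;> rcases v with v | ⟨j, lj⟩ <;> rfl
  loopless := by
    intro v
    rcases v with v | ⟨i, li⟩ <;> rfl

end Multigraph

/-!
Every bunch size divides `L`, so firing `{v₀, …, vⱼ}` (`L` / size of the `j`-th bunch) times
moves `L` chips from `vⱼ` to `vⱼ₊₁`; hence `L·v₀` has positive rank and `gon ≤ L`.

Conversely, let `D` be effective of positive rank and degree `d < L`. Firing changes the number
of chips on `v₀, …, vⱼ` (the `j`-th cut sum) by a multiple of the `j`-th bunch size, so the
least `j`-th cut sum `mⱼ` over the effective divisors `E ~ D` is congruent to all of them, and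
`mⱼ` is monotone in `j` with values in `[0, d]`. Pigeonholing over the `n ≥ sL²` indices, `m`
is constant, `u`, on a stretch of length about `ds`. A divisor `E ~ D` with a chip just after
the start of the stretch has cut sums in `u + [1, d]` along it, each congruent to `u` modulo the
bunch size; pigeonholing again, one of these values `u + w` is taken at `s` consecutive indices,
so `w` is a positive multiple of every `aᵢ`, and `L ≤ w ≤ d`.
-/

theorem Nat.exists_lt_add_mod_eq (q : ℕ) {s i : ℕ} (hi : i < s) : ∃ t < s, (q + t) % s = i := by
  refine ⟨(i + (s - q % s)) % s, Nat.mod_lt _ (by omega), ?_⟩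
  have hq := Nat.mod_add_div q s
  have hqs := Nat.mod_lt q (show 0 < s by omega)
  rw [Nat.add_mod_mod, show q + (i + (s - q % s)) = i + s * (q / s + 1) by rw [mul_add]; omega,
    Nat.add_mul_mod_self_left, Nat.mod_eq_of_lt hi]

theorem Monotone.exists_run_eq {f : ℕ → ℤ} (hf : Monotone f) {M r N : ℕ}
    (hspan : f N < f 0 + M) (hN : M * r ≤ N) :
    ∃ p, p + r ≤ N ∧ ∀ t ≤ r, f (p + t) = f p := by
  induction M generalizing f N with
  | zero => exact absurd (hf (Nat.zero_le N)) (by simpa using hspan)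
  | succ M ih =>
    by_cases hr : f r = f 0
    · exact ⟨0, by nlinarith, fun t ht => by
        simpa using le_antisymm (hr ▸ hf ht) (hf (Nat.zero_le t))⟩
    · have hjump : f 0 + 1 ≤ f r := lt_of_le_of_ne (hf (Nat.zero_le r)) (Ne.symm hr)
      have hrN : r ≤ N := by nlinarith
      obtain ⟨p, hp, hrun⟩ := ih (f := fun t => f (r + t)) (N := N - r)
        (fun x y hxy => hf (by omega))
        (by rw [add_zero, Nat.add_sub_cancel' hrN]; push_cast at hspan; linarith)
        (by rw [Nat.succ_mul] at hN; omega)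
      exact ⟨r + p, by omega, fun t ht => by simpa [add_assoc] using hrun t ht⟩

namespace Multigraph

theorem effective_single {V : Type} [DecidableEq V] (v : V) (L : ℕ) :
    Effective (Pi.single v (L : ℤ)) := by
  intro u
  rw [Pi.single_apply]
  split_ifs <;> positivity

section General

variable {V : Type} [Fintype V] {G : Multigraph V}

theorem degree_single [DecidableEq V] (v : V) (L : ℕ) : degree (Pi.single v (L : ℤ)) = L :=
  Fintype.sum_pi_single' v _

theorem degree_nonneg {D : V → ℤ} (hD : Effective D) : 0 ≤ degree D :=
  Finset.sum_nonneg fun v _ => hD v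

theorem LinEquiv.refl (G : Multigraph V) (D : V → ℤ) : G.LinEquiv D D :=
  ⟨0, by simp⟩

theorem LinEquiv.trans {D E F : V → ℤ} (h₁ : G.LinEquiv D E) (h₂ : G.LinEquiv E F) :
    G.LinEquiv D F := by
  obtain ⟨σ, hσ⟩ := h₁
  obtain ⟨τ, hτ⟩ := h₂
  refine ⟨σ + τ, fun v => ?_⟩
  rw [hτ, hσ, add_assoc, ← Finset.sum_add_distrib]
  congr 1
  exact Finset.sum_congr rfl fun w _ => by simp only [Pi.add_apply]; ring

theorem LinEquiv.exists_sum_sub_eq {D E : V → ℤ} (h : G.LinEquiv D E) (S : Finset V) :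
    ∃ σ : V → ℤ, ∑ v ∈ S, (E v - D v) = ∑ v ∈ S, ∑ w ∈ Sᶜ, (G.mul v w : ℤ) * (σ w - σ v) := by
  obtain ⟨σ, hσ⟩ := h
  refine ⟨σ, ?_⟩
  -- the flow between two vertices of `S` is counted once in each direction
  have hinner : ∑ v ∈ S, ∑ w ∈ S, (G.mul v w : ℤ) * (σ w - σ v) = 0 := by
    have hanti : ∑ v ∈ S, ∑ w ∈ S, (G.mul v w : ℤ) * (σ w - σ v)
        = -∑ v ∈ S, ∑ w ∈ S, (G.mul v w : ℤ) * (σ w - σ v) := by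
      conv_lhs => rw [Finset.sum_comm]
      simp only [← Finset.sum_neg_distrib]
      exact Finset.sum_congr rfl fun w _ => Finset.sum_congr rfl fun v _ => by
        rw [G.symm v w]; ring
    linarith
  simp only [hσ, add_sub_cancel_left, ← Finset.sum_add_sum_compl S, Finset.sum_add_distrib,
    hinner, zero_add]

theorem LinEquiv.degree_eq {D E : V → ℤ} (h : G.LinEquiv D E) : degree E = degree D := by
  obtain ⟨σ, hσ⟩ := h.exists_sum_sub_eq Finset.univ
  simpa [degree, Finset.sum_sub_distrib, sub_eq_zero] using hσ

theorem PosRank.one_le_degree [Nonempty V] {D : V → ℤ} (h : G.PosRank D) : 1 ≤ degree D := by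
  obtain ⟨E, hDE, hE, hv⟩ := h (Classical.arbitrary V)
  rw [← hDE.degree_eq]
  exact hv.trans (Finset.single_le_sum (fun v _ => hE v) (Finset.mem_univ _))

theorem gonality_eq_of_forall_le {D : V → ℤ} {k : ℕ} (hD : Effective D) (hrank : G.PosRank D)
    (hdeg : degree D = k) (hmin : ∀ D, Effective D → G.PosRank D → (k : ℤ) ≤ degree D) :
    G.gonality = k :=
  le_antisymm (Nat.sInf_le ⟨D, hD, hrank, hdeg⟩) <|
    le_csInf ⟨k, D, hD, hrank, hdeg⟩ fun d ⟨D', hD', hrank', hdeg'⟩ => by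
      exact_mod_cast hdeg' ▸ hmin D' hD' hrank'

end General

variable {n : ℕ}

def cutSum (D : Fin (n + 1) → ℤ) (j : ℕ) : ℤ := ∑ v : Fin (n + 1) with v.val ≤ j, D v

section CutSum

variable {D : Fin (n + 1) → ℤ}

theorem cutSum_mono (hD : Effective D) : Monotone (cutSum D) := fun _ _ hij =>
  Finset.sum_le_sum_of_subset_of_nonneg (Finset.monotone_filter_right _ fun _ _ h => h.trans hij)
    fun v _ _ => hD v

theorem cutSum_nonneg (hD : Effective D) (j : ℕ) : 0 ≤ cutSum D j :=
  Finset.sum_nonneg fun v _ => hD v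

theorem cutSum_le_degree (hD : Effective D) (j : ℕ) : cutSum D j ≤ degree D :=
  Finset.sum_le_sum_of_subset_of_nonneg (Finset.filter_subset _ _) fun v _ _ => hD v

theorem cutSum_add_le (hD : Effective D) {j : ℕ} {v : Fin (n + 1)} (hjv : j < v) :
    cutSum D j + D v ≤ cutSum D v := by
  have hv : v ∉ ({u | (u : ℕ) ≤ j} : Finset (Fin (n + 1))) := by simp; omega
  rw [cutSum, cutSum, add_comm, ← Finset.sum_insert hv]
  refine Finset.sum_le_sum_of_subset_of_nonneg (fun u hu => ?_) fun u _ _ => hD u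
  simp only [Finset.mem_insert, Finset.mem_filter, Finset.mem_univ, true_and] at hu ⊢
  rcases hu with rfl | hu <;> omega

end CutSum

def minCutSum (G : Multigraph (Fin (n + 1))) (D : Fin (n + 1) → ℤ) (j : ℕ) : ℕ :=
  sInf {x : ℕ | ∃ E, G.LinEquiv D E ∧ Effective E ∧ cutSum E j = x}

section MinCutSum

variable {G : Multigraph (Fin (n + 1))} {D E : Fin (n + 1) → ℤ}

theorem minCutSum_le_cutSum (hDE : G.LinEquiv D E) (hE : Effective E) (j : ℕ) :
    (G.minCutSum D j : ℤ) ≤ cutSum E j := by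
  obtain ⟨x, hx⟩ := Int.eq_ofNat_of_zero_le (cutSum_nonneg hE j)
  rw [hx, Nat.cast_le]
  exact Nat.sInf_le ⟨E, hDE, hE, hx⟩

theorem exists_cutSum_eq_minCutSum (hD : Effective D) (j : ℕ) :
    ∃ E, G.LinEquiv D E ∧ Effective E ∧ cutSum E j = G.minCutSum D j := by
  obtain ⟨x, hx⟩ := Int.eq_ofNat_of_zero_le (cutSum_nonneg hD j)
  exact Nat.sInf_mem (s := {x : ℕ | ∃ E, G.LinEquiv D E ∧ Effective E ∧ cutSum E j = x})
    ⟨x, D, LinEquiv.refl G D, hD, hx⟩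

theorem minCutSum_mono (hD : Effective D) : Monotone (G.minCutSum D) := fun j k hjk => by
  obtain ⟨E, hDE, hE, hk⟩ := exists_cutSum_eq_minCutSum (G := G) hD k
  exact_mod_cast (minCutSum_le_cutSum hDE hE j).trans (hk ▸ cutSum_mono hE hjk)

theorem minCutSum_le_degree (hD : Effective D) (j : ℕ) : (G.minCutSum D j : ℤ) ≤ degree D :=
  (minCutSum_le_cutSum (LinEquiv.refl G D) hD j).trans (cutSum_le_degree hD j)

end MinCutSum

variable {b : ℕ → ℕ}

theorem bananaPath_mul (u v : Fin (n + 1)) : (bananaPath n b).mul u v =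
    if u.val + 1 = v.val then b u else if v.val + 1 = u.val then b v else 0 := rfl

theorem LinEquiv.dvd_cutSum_sub {D E : Fin (n + 1) → ℤ} (h : (bananaPath n b).LinEquiv D E)
    (j : ℕ) : (b j : ℤ) ∣ cutSum E j - cutSum D j := by
  obtain ⟨σ, hσ⟩ := h.exists_sum_sub_eq {v | (v : ℕ) ≤ j}
  rw [cutSum, cutSum, ← Finset.sum_sub_distrib, hσ]
  refine Finset.dvd_sum fun v hv => Finset.dvd_sum fun w hw => Dvd.dvd.mul_right ?_ _
  simp only [Finset.mem_compl, Finset.mem_filter, Finset.mem_univ, true_and] at hv hw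
  rw [bananaPath_mul]
  split_ifs with h₁ h₂
  · exact Int.natCast_dvd_natCast.mpr (by rw [show (v : ℕ) = j by omega])
  · omega
  · simp

theorem dvd_cutSum_sub_minCutSum {D E : Fin (n + 1) → ℤ} (hD : Effective D)
    (hDE : (bananaPath n b).LinEquiv D E) (j : ℕ) :
    (b j : ℤ) ∣ cutSum E j - (bananaPath n b).minCutSum D j := by
  obtain ⟨F, hDF, -, hF⟩ := exists_cutSum_eq_minCutSum (G := bananaPath n b) hD j
  rw [← hF, ← sub_sub_sub_cancel_right _ _ (cutSum D j)]
  exact (hDE.dvd_cutSum_sub j).sub (hDF.dvd_cutSum_sub j)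

theorem linEquiv_single_castSucc_single_succ {L : ℕ} (i : Fin n) (hL : b i ∣ L) :
    (bananaPath n b).LinEquiv (Pi.single i.castSucc (L : ℤ)) (Pi.single i.succ (L : ℤ)) := by
  obtain ⟨q, rfl⟩ := hL
  refine ⟨fun w => if (w : ℕ) ≤ i then (q : ℤ) else 0, fun ⟨v, hv⟩ => ?_⟩
  rw [Fintype.sum_eq_add i.castSucc i.succ Fin.castSucc_lt_succ.ne]
  · simp only [bananaPath_mul, Pi.single_apply, Fin.ext_iff, Fin.val_castSucc, Fin.val_succ]
    split_ifs <;> subst_vars <;> push_cast <;> first | omega | ring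
  · rintro w ⟨hw₁, hw₂⟩
    simp only [bananaPath_mul, ne_eq, Fin.ext_iff, Fin.val_castSucc, Fin.val_succ] at hw₁ hw₂ ⊢
    split_ifs <;> omega

theorem posRank_bananaPath_single_zero {L : ℕ} (hL : 0 < L) (hb : ∀ t, b t ∣ L) :
    (bananaPath n b).PosRank (Pi.single 0 (L : ℤ)) := by
  have hmove : ∀ v, (bananaPath n b).LinEquiv (Pi.single 0 (L : ℤ)) (Pi.single v (L : ℤ)) := by
    intro v
    induction v using Fin.induction with
    | zero => exact LinEquiv.refl _ _
    | succ i ih => exact ih.trans (linEquiv_single_castSucc_single_succ i (hb i))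
  exact fun v => ⟨_, hmove v, effective_single v L, by simpa [Nat.one_le_iff_ne_zero] using hL.ne'⟩

theorem exists_window_dvd {D : Fin (n + 1) → ℤ} {d r : ℕ} (hD : Effective D)
    (hrank : (bananaPath n b).PosRank D) (hdeg : degree D = d)
    (hn : (d + 1) * (d * r + 1) < n) :
    ∃ q w : ℕ, 0 < w ∧ w ≤ d ∧ ∀ t ≤ r, b (q + t) ∣ w := by
  set m : ℕ → ℤ := fun j => (bananaPath n b).minCutSum D j
  have hm_mono : Monotone m := fun _ _ h => Nat.cast_le.mpr (minCutSum_mono hD h)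
  obtain ⟨p, hp, hm_run⟩ := hm_mono.exists_run_eq (M := d + 1) (r := d * r + 1) (N := n - 1)
    (by have := minCutSum_le_degree (G := bananaPath n b) hD (n - 1); simp only [m]; omega)
    (by omega)
  obtain ⟨E, hDE, hE, hEp⟩ := hrank ⟨p + 1, by omega⟩
  set g : ℕ → ℤ := fun t => cutSum E (p + 1 + t) - m p
  have hg_mono : Monotone g := fun x y h => by
    simpa [g] using cutSum_mono hE (show p + 1 + x ≤ p + 1 + y by omega)
  have hg_pos : ∀ t, 1 ≤ g t := fun t => by
    have h₁ := minCutSum_le_cutSum hDE hE p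
    have h₂ := cutSum_add_le hE (v := ⟨p + 1, by omega⟩) (j := p) (by simp)
    have h₃ := cutSum_mono hE (show p + 1 ≤ p + 1 + t by omega)
    simp only [g, m] at h₁ h₂ h₃ hEp ⊢
    linarith
  have hg_le : ∀ t, g t ≤ d := fun t => by
    have := cutSum_le_degree hE (p + 1 + t)
    simp only [g, m, ← hdeg, ← hDE.degree_eq]
    linarith [Int.natCast_nonneg ((bananaPath n b).minCutSum D p)]
  obtain ⟨q, hq, hg_run⟩ := hg_mono.exists_run_eq (M := d) (r := r) (N := d * r)
    (by linarith [hg_pos 0, hg_le (d * r)]) le_rfl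
  obtain ⟨w, hw⟩ := Int.eq_ofNat_of_zero_le (zero_le_one.trans (hg_pos q))
  refine ⟨p + 1 + q, w, by linarith [hg_pos q], by linarith [hg_le q], fun t ht => ?_⟩
  have hm : m (p + 1 + q + t) = m p := by simpa [add_assoc] using hm_run (1 + q + t) (by nlinarith)
  have hgq : cutSum E (p + 1 + q + t) - m p = g q := by simpa [g, add_assoc] using hg_run t ht
  have hcut : (b (p + 1 + q + t) : ℤ) ∣ cutSum E (p + 1 + q + t) - m (p + 1 + q + t) :=
    dvd_cutSum_sub_minCutSum hD hDE _
  rwa [hm, hgq, hw, Int.natCast_dvd_natCast] at hcut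

end Multigraph

open Multigraph in
/-- If `L = lcm(a_1, …, a_s)` and `n ≥ s·L²`, then the `A`-monoculture
banana path on `n+1` vertices has gonality exactly `L`. -/
theorem monoculture_gonality_eq_lcm
    (s : ℕ) (hs : 0 < s) (a : ℕ → ℕ) (ha : ∀ i < s, 0 < a i)
    (n : ℕ) (hn : s * ((Finset.range s).lcm a) ^ 2 ≤ n) :
    (bananaPath n (fun i => a (i % s))).gonality = (Finset.range s).lcm a := by
  set L := (Finset.range s).lcm a
  have hL : 0 < L := Nat.pos_of_ne_zero <|
    Finset.lcm_ne_zero_iff.mpr fun i hi => (ha i (Finset.mem_range.mp hi)).ne'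
  have hdvd : ∀ i < s, a i ∣ L := fun i hi => Finset.dvd_lcm (Finset.mem_range.mpr hi)
  refine gonality_eq_of_forall_le (effective_single 0 L)
    (posRank_bananaPath_single_zero hL fun t => hdvd _ (Nat.mod_lt t hs)) (degree_single 0 L)
    fun D hD hrank => ?_
  obtain ⟨d, hd⟩ := Int.eq_ofNat_of_zero_le (degree_nonneg hD)
  have hd1 : 1 ≤ d := by exact_mod_cast hd ▸ hrank.one_le_degree
  rw [hd, Nat.cast_le]
  by_contra! hdL
  have hlen : (d + 1) * (d * (s - 1) + 1) < n :=
    calc (d + 1) * (d * (s - 1) + 1) ≤ L * (L * (s - 1) + 1) := by gcongr; omega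
      _ < s * L ^ 2 := by
        obtain ⟨s, rfl⟩ : ∃ s', s = s' + 1 := ⟨s - 1, by omega⟩
        simp only [Nat.add_sub_cancel]; nlinarith
      _ ≤ n := hn
  obtain ⟨q, w, hw, hwd, hqw⟩ := exists_window_dvd hD hrank hd hlen
  have hLw : L ∣ w := Finset.lcm_dvd fun i hi => by
    obtain ⟨t, ht, hqt⟩ := Nat.exists_lt_add_mod_eq q (Finset.mem_range.mp hi)
    simpa [hqt] using hqw t (by omega)
  exact absurd (Nat.le_of_dvd hw hLw) (by omega)
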